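/- Let c and c' be generic linear lists on the same items, with c_1 < c_2 and c_{m−1} > c_m for both, that agree except at a single item, and let p and q be neighboring interior items that are contiguous in both c and c', such that in c item p is non-critical and q is a local maximum, while in c' item p is a local maximum and q is non-critical. Then the critical items of c' are those of c with q replaced by p, and the map fixing every critical item except sending q to p is an isomorphism of T(c) onto T(c') preserving both the tree structure and the Condition-II path decomposition. -/

import Mathlib

/-- A full binary tree with nodes labeled by `α`. -/
inductive FullBinTree (α : Type) : Type
  | leaf : α → FullBinTree α
  | node : FullBinTree α → α → FullBinTree α → FullBinTree α
  deriving DecidableEq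

namespace FullBinTree

variable {α : Type}

/-- The in-order traversal of the tree. -/
def inorder : FullBinTree α → List α
  | leaf x => [x]
  | node l x r => inorder l ++ [x] ++ inorder r

def rootLabel : FullBinTree α → α
  | leaf x => x
  | node _ x _ => x

def leafList : FullBinTree α → List α
  | leaf x => [x]
  | node l _ r => leafList l ++ leafList r

def internalList : FullBinTree α → List α
  | leaf _ => []
  | node l x r => internalList l ++ [x] ++ internalList r

/-- Condition I.2: values strictly increase along every edge from child to parent. -/
def ValOrdered (v : α → ℝ) : FullBinTree α → Prop
  | leaf _ => True
  | node l x r => v (rootLabel l) < v x ∧ v (rootLabel r) < v x ∧ ValOrdered v l ∧ ValOrdered v r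

/-- `Sub s t` means `s` is a subtree of `t`. -/
inductive Sub : FullBinTree α → FullBinTree α → Prop
  | refl (t : FullBinTree α) : Sub t t
  | left {s l r : FullBinTree α} (x : α) : Sub s l → Sub s (node l x r)
  | right {s l r : FullBinTree α} (x : α) : Sub s r → Sub s (node l x r)

def IsParentOf (t : FullBinTree α) (p c : α) : Prop :=
  ∃ l r, Sub (node l p r) t ∧ (rootLabel l = c ∨ rootLabel r = c)

def IsLeftChildOf (t : FullBinTree α) (p c : α) : Prop :=
  ∃ l r, Sub (node l p r) t ∧ rootLabel l = c

def IsRightChildOf (t : FullBinTree α) (p c : α) : Prop :=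
  ∃ l r, Sub (node l p r) t ∧ rootLabel r = c

/-- Relabel the nodes of the tree. -/
def mapNodes {β : Type} (σ : α → β) : FullBinTree α → FullBinTree β
  | leaf x => leaf (σ x)
  | node l x r => node (mapNodes σ l) (σ x) (mapNodes σ r)

variable [DecidableEq α]

/-- The list of nodes on the path from the root down to `x` (for `x` a node of the tree). -/
def pathTo : FullBinTree α → α → List α
  | leaf y, _ => [y]
  | node l y r, x =>
    if x = y then [y]
    else if x ∈ inorder l then y :: pathTo l x
    else y :: pathTo r x

/-- The subtree rooted at the node `x`. -/
def subtreeAt : FullBinTree α → α → FullBinTree α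
  | leaf y, _ => leaf y
  | node l y r, x =>
    if x = y then node l y r
    else if x ∈ inorder l then subtreeAt l x
    else subtreeAt r x

/-- Condition II: the upper end `b(a)` of the path of the leaf `a`, i.e. the nearest
ancestor of `a` in whose subtree `a` does not have the smallest value; the result
`none` encodes the special root. -/
noncomputable def bOf (t : FullBinTree α) (v : α → ℝ) (a : α) : Option α :=
  (((pathTo t a).dropLast).reverse).find?
    (fun b => (inorder (subtreeAt t b)).any (fun u => decide (v u < v a)))

/-- The edges `(child, parent)` of the Condition-II path of the leaf `a` in the
augmented tree; the parent `none` encodes the special root. -/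
noncomputable def pathEdges (t : FullBinTree α) (v : α → ℝ) (a : α) : List (α × Option α) :=
  let rev := ((pathTo t a).dropLast).reverse
  match rev.findIdx?
      (fun b => (inorder (subtreeAt t b)).any (fun u => decide (v u < v a))) with
  | some k => ((a :: rev.take (k+1)).zip (rev.take (k+1))).map (fun cp => (cp.1, some cp.2))
  | none => ((a :: rev).zip rev).map (fun cp => (cp.1, some cp.2))
      ++ [((a :: rev).getLast (List.cons_ne_nil _ _), none)]

end FullBinTree

open FullBinTree

/-- The piecewise linear map determined by the list `c` (on the domain `[1,m]`). -/
noncomputable def plMap (c : ℕ → ℝ) (x : ℝ) : ℝ :=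
  c (Int.floor x).toNat +
    (x - (Int.floor x : ℝ)) * (c ((Int.floor x).toNat + 1) - c (Int.floor x).toNat)

/-- The set of points of the domain `[1,m]` with values in `[A,B]`. -/
def levelBand (m : ℕ) (c : ℕ → ℝ) (A B : ℝ) : Set ℝ :=
  {x : ℝ | x ∈ Set.Icc (1 : ℝ) (m : ℝ) ∧ plMap c x ∈ Set.Icc A B}

/-- The sublevel set of the map at `s`, within the domain `[1,m]`. -/
def sublevel (m : ℕ) (c : ℕ → ℝ) (s : ℝ) : Set ℝ :=
  {x : ℝ | x ∈ Set.Icc (1 : ℝ) (m : ℝ) ∧ plMap c x ≤ s}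

/-- The support of the frame spanned by the items `a` and `b`: the connected component
of `f⁻¹([f a, f b])` (within the domain) containing `a`. -/
def frameSupport (m : ℕ) (c : ℕ → ℝ) (a b : ℕ) : Set ℝ :=
  connectedComponentIn (levelBand m c (c a) (c b)) (a : ℝ)

/-- `W(a,b)` is a triple-panel window of the piecewise linear map of `c`:
`a` and `b` are items with `c a < c b` lying in a common connected component `[x,y]`
of `f⁻¹([c a, c b])`, and the value at the end of the support away from the mirror
equals `c a`. -/
def IsTPW (m : ℕ) (c : ℕ → ℝ) (a b : ℕ) : Prop :=
  1 ≤ a ∧ a ≤ m ∧ 1 ≤ b ∧ b ≤ m ∧ c a < c b ∧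
  (b : ℝ) ∈ frameSupport m c a b ∧
  (if a < b then plMap c (sSup (frameSupport m c a b)) = c a
   else plMap c (sInf (frameSupport m c a b)) = c a)

/-- `i` is an interior local minimum of the list `c`. -/
def IsLocMin (m : ℕ) (c : ℕ → ℝ) (i : ℕ) : Prop :=
  1 < i ∧ i < m ∧ c i < c (i - 1) ∧ c i < c (i + 1)

/-- `i` is an interior local maximum of the list `c`. -/
def IsLocMax (m : ℕ) (c : ℕ → ℝ) (i : ℕ) : Prop :=
  1 < i ∧ i < m ∧ c (i - 1) < c i ∧ c (i + 1) < c i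

/-- `i` is a critical item that is a leaf: an endpoint or an interior local minimum. -/
def IsCritLeaf (m : ℕ) (c : ℕ → ℝ) (i : ℕ) : Prop :=
  i = 1 ∨ i = m ∨ IsLocMin m c i

/-- `i` is a critical item of the list `c`. -/
def IsCritItem (m : ℕ) (c : ℕ → ℝ) (i : ℕ) : Prop :=
  IsCritLeaf m c i ∨ IsLocMax m c i

/-- `t` is the tree `T(c)`: a full binary tree on the critical items of `c`
satisfying Condition I.1 (the in-order traversal lists the critical items in
increasing order of position) and Condition I.2 (values increase from child to
parent). -/
def IsTreeOf (m : ℕ) (c : ℕ → ℝ) (t : FullBinTree ℕ) : Prop :=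
  List.Chain' (· < ·) (FullBinTree.inorder t) ∧
  (∀ i, i ∈ FullBinTree.inorder t ↔ IsCritItem m c i) ∧
  FullBinTree.ValOrdered c t

/-- Items `p` and `q` are contiguous in the value assignment `w`: no other item has
its value in the closed interval between `w p` and `w q`. -/
def Contig (m : ℕ) (w : ℕ → ℝ) (p q : ℕ) : Prop :=
  ∀ u, 1 ≤ u → u ≤ m → u ≠ p → u ≠ q →
    w u ∉ Set.Icc (min (w p) (w q)) (max (w p) (w q))

namespace FullBinTree

variable {α : Type} {β : Type}

lemma inorder_ne_nil : ∀ t : FullBinTree α, inorder t ≠ [] := by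
  intro t; cases t <;> simp [inorder]

lemma mem_node_iff {x y : α} {l r : FullBinTree α} :
    x ∈ inorder (node l y r) ↔ x ∈ inorder l ∨ x = y ∨ x ∈ inorder r := by
  simp [inorder, or_assoc]

lemma mem_node_left {x y : α} {l r : FullBinTree α} (h : x ∈ inorder l) :
    x ∈ inorder (node l y r) := mem_node_iff.2 (Or.inl h)

lemma mem_node_root {y : α} {l r : FullBinTree α} :
    y ∈ inorder (node l y r) := mem_node_iff.2 (Or.inr (Or.inl rfl))

lemma mem_node_right {x y : α} {l r : FullBinTree α} (h : x ∈ inorder r) :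
    x ∈ inorder (node l y r) := mem_node_iff.2 (Or.inr (Or.inr h))

lemma rootLabel_mem : ∀ t : FullBinTree α, rootLabel t ∈ inorder t := by
  intro t; cases t with
  | leaf x => simp [inorder, rootLabel]
  | node l y r => exact mem_node_root

lemma inorder_mapNodes (σ : α → β) : ∀ t : FullBinTree α,
    inorder (mapNodes σ t) = (inorder t).map σ := by
  intro t; induction t with
  | leaf x => rfl
  | node l y r ihl ihr => simp [inorder, mapNodes, ihl, ihr]

lemma rootLabel_mapNodes (σ : α → β) : ∀ t : FullBinTree α,
    rootLabel (mapNodes σ t) = σ (rootLabel t) := by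
  intro t; cases t <;> rfl

lemma leafList_subset : ∀ t : FullBinTree α, ∀ x ∈ leafList t, x ∈ inorder t := by
  intro t; induction t with
  | leaf y => intro x hx; simpa [leafList, inorder] using hx
  | node l y r ihl ihr =>
    intro x hx
    rcases List.mem_append.1 hx with h | h
    · exact mem_node_left (ihl x h)
    · exact mem_node_right (ihr x h)

lemma pathTo_subset [DecidableEq α] : ∀ (t : FullBinTree α) (a : α), ∀ x ∈ pathTo t a, x ∈ inorder t := by
  intro t; induction t with
  | leaf y => intro a x hx; simpa [pathTo, inorder] using hx
  | node l y r ihl ihr =>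
    intro a x hx
    simp only [pathTo] at hx
    split_ifs at hx with h1 h2
    · simp at hx; subst hx; exact mem_node_root
    · rcases List.mem_cons.1 hx with h | h
      · subst h; exact mem_node_root
      · exact mem_node_left (ihl a x h)
    · rcases List.mem_cons.1 hx with h | h
      · subst h; exact mem_node_root
      · exact mem_node_right (ihr a x h)

lemma subtreeAt_subset [DecidableEq α] : ∀ (t : FullBinTree α) (a : α),
    ∀ x ∈ inorder (subtreeAt t a), x ∈ inorder t := by
  intro t; induction t with
  | leaf y => intro a x hx; simpa [subtreeAt] using hx
  | node l y r ihl ihr =>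
    intro a x hx
    simp only [subtreeAt] at hx
    split_ifs at hx with h1 h2
    · exact hx
    · exact mem_node_left (ihl a x hx)
    · exact mem_node_right (ihr a x hx)

lemma valOrdered_map (σ : α → β) (v : α → ℝ) (w : β → ℝ) :
    ∀ t : FullBinTree α, ValOrdered v t →
    (∀ x ∈ inorder t, ∀ y ∈ inorder t, v x < v y → w (σ x) < w (σ y)) →
    ValOrdered w (mapNodes σ t) := by
  intro t; induction t with
  | leaf x => intro _ _; trivial
  | node l y r ihl ihr =>
    intro h hmono
    obtain ⟨h1, h2, h3, h4⟩ := h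
    refine ⟨?_, ?_, ?_, ?_⟩
    · rw [rootLabel_mapNodes]
      exact hmono _ (mem_node_left (rootLabel_mem l)) y mem_node_root h1
    · rw [rootLabel_mapNodes]
      exact hmono _ (mem_node_right (rootLabel_mem r)) y mem_node_root h2
    · exact ihl h3 fun x hx y hy hxy => hmono x (mem_node_left hx) y (mem_node_left hy) hxy
    · exact ihr h4 fun x hx y hy hxy => hmono x (mem_node_right hx) y (mem_node_right hy) hxy

lemma val_le_root (v : α → ℝ) : ∀ t : FullBinTree α, ValOrdered v t →
    ∀ x ∈ inorder t, v x ≤ v (rootLabel t) := by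
  intro t; induction t with
  | leaf y => intro _ x hx; simp [inorder] at hx; subst hx; simp [rootLabel]
  | node l y r ihl ihr =>
    intro h x hx
    obtain ⟨h1, h2, h3, h4⟩ := h
    rcases mem_node_iff.1 hx with h | h | h
    · exact le_trans (ihl h3 x h) (le_of_lt h1)
    · subst h; rfl
    · exact le_trans (ihr h4 x h) (le_of_lt h2)

lemma split_unique {a : α} : ∀ (l₁ l₂ r₁ r₂ : List α), a ∉ l₁ → a ∉ l₂ →
    l₁ ++ a :: r₁ = l₂ ++ a :: r₂ → l₁ = l₂ ∧ r₁ = r₂ := by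
  intro l₁
  induction l₁ with
  | nil =>
    intro l₂ r₁ r₂ _ h2 he
    cases l₂ with
    | nil => simpa using he
    | cons b l₂ =>
      simp only [List.nil_append, List.cons_append, List.cons.injEq] at he
      exact absurd (List.mem_cons_self) (he.1 ▸ h2)
  | cons b l₁ ih =>
    intro l₂ r₁ r₂ h1 h2 he
    cases l₂ with
    | nil =>
      simp only [List.cons_append, List.nil_append, List.cons.injEq] at he
      exact absurd (List.mem_cons_self) (he.1.symm ▸ h1)
    | cons b₂ l₂ =>
      simp only [List.cons_append, List.cons.injEq] at he
      obtain ⟨hb, he⟩ := he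
      have := ih l₂ r₁ r₂ (fun h => h1 (List.mem_cons_of_mem b h))
        (fun h => h2 (List.mem_cons_of_mem b₂ h)) he
      exact ⟨by rw [hb, this.1], this.2⟩

lemma tree_unique (v : α → ℝ) : ∀ (t s : FullBinTree α), ValOrdered v t → ValOrdered v s →
    (∀ x ∈ inorder t, ∀ y ∈ inorder t, v x = v y → x = y) →
    inorder t = inorder s → t = s := by
  intro t
  induction t with
  | leaf x =>
    intro s _ _ _ he
    cases s with
    | leaf z => simp [inorder] at he; rw [he]
    | node l z r =>
      exfalso
      have hlen := congrArg List.length he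
      simp [inorder] at hlen
      have h1 := List.length_pos_iff.2 (inorder_ne_nil l)
      omega
  | node l y r ihl ihr =>
    intro s hT hS hinj he
    cases s with
    | leaf z =>
      exfalso
      have hlen := congrArg List.length he
      simp [inorder] at hlen
      have h1 := List.length_pos_iff.2 (inorder_ne_nil l)
      omega
    | node l' z r' =>
      obtain ⟨u1, u2, u3, u4⟩ := hT
      obtain ⟨w1, w2, w3, w4⟩ := hS
      have hy : y ∈ inorder (node l y r) := mem_node_root
      have hz : z ∈ inorder (node l y r) := by rw [he]; exact mem_node_root
      have hyz : y = z := by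
        apply hinj y hy z hz
        have hle1 : v y ≤ v z := by
          have h := val_le_root v (node l' z r') ⟨w1, w2, w3, w4⟩ y (by rw [← he]; exact hy)
          simpa [rootLabel] using h
        have hle2 : v z ≤ v y := by
          have h := val_le_root v (node l y r) ⟨u1, u2, u3, u4⟩ z hz
          simpa [rootLabel] using h
        linarith
      subst hyz
      have hnl : y ∉ inorder l := by
        intro hmem
        have := val_le_root v l u3 y hmem
        linarith
      have hnl' : y ∉ inorder l' := by
        intro hmem
        have := val_le_root v l' w3 y hmem
        linarith
      have he' : inorder l ++ y :: inorder r = inorder l' ++ y :: inorder r' := by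
        simpa [inorder, List.append_assoc] using he
      obtain ⟨hel, her⟩ := split_unique _ _ _ _ hnl hnl' he'
      have hl := ihl l' u3 w3
        (fun x hx y' hy' h => hinj x (mem_node_left hx) y' (mem_node_left hy') h) hel
      have hr := ihr r' u4 w4
        (fun x hx y' hy' h => hinj x (mem_node_right hx) y' (mem_node_right hy') h) her
      rw [hl, hr]

lemma find?_congr' {l : List α} {p q : α → Bool} (h : ∀ x ∈ l, p x = q x) :
    l.find? p = l.find? q := by
  induction l with
  | nil => rfl
  | cons a l ih =>
    have ha := h a (List.mem_cons_self)
    cases hq : q a with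
    | false =>
      rw [List.find?_cons_of_neg (by rw [ha, hq]; exact Bool.false_ne_true),
        List.find?_cons_of_neg (by rw [hq]; exact Bool.false_ne_true)]
      exact ih fun x hx => h x (List.mem_cons_of_mem a hx)
    | true =>
      rw [List.find?_cons_of_pos (by rw [ha, hq]), List.find?_cons_of_pos hq]

lemma any_congr' {l : List α} {p q : α → Bool} (h : ∀ x ∈ l, p x = q x) :
    l.any p = l.any q := by
  induction l with
  | nil => rfl
  | cons a l ih =>
    simp only [List.any_cons]
    rw [h a (List.mem_cons_self), ih fun x hx => h x (List.mem_cons_of_mem a hx)]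

lemma pathTo_map [DecidableEq α] [DecidableEq β] (σ : α → β) :
    ∀ (t : FullBinTree α) (a : α),
    (∀ x ∈ inorder t, ∀ y ∈ inorder t, σ x = σ y → x = y) → a ∈ inorder t →
    pathTo (mapNodes σ t) (σ a) = (pathTo t a).map σ := by
  intro t
  induction t with
  | leaf y => intro a _ _; simp [mapNodes, pathTo]
  | node l y r ihl ihr =>
    intro a hinj ha
    have hyt : y ∈ inorder (node l y r) := mem_node_root
    by_cases hay : a = y
    · subst hay; simp [mapNodes, pathTo]
    · have hσy : ¬ (σ a = σ y) := fun h => hay (hinj a ha y hyt h)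
      by_cases hal : a ∈ inorder l
      · have hσl : σ a ∈ inorder (mapNodes σ l) := by
          rw [inorder_mapNodes]; exact List.mem_map_of_mem hal
        show pathTo (node (mapNodes σ l) (σ y) (mapNodes σ r)) (σ a) = _
        rw [pathTo, if_neg hσy, if_pos hσl,
          show pathTo (node l y r) a = y :: pathTo l a by rw [pathTo, if_neg hay, if_pos hal],
          List.map_cons, ihl a (fun x hx y' hy' h => hinj x (mem_node_left hx) y' (mem_node_left hy') h) hal]
      · have hσl : σ a ∉ inorder (mapNodes σ l) := by
          rw [inorder_mapNodes]
          intro hmem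
          obtain ⟨x, hx, hxe⟩ := List.mem_map.1 hmem
          exact hal (hinj x (mem_node_left hx) a ha hxe ▸ hx)
        have har : a ∈ inorder r := by
          rcases mem_node_iff.1 ha with h | h | h
          · exact absurd h hal
          · exact absurd h hay
          · exact h
        show pathTo (node (mapNodes σ l) (σ y) (mapNodes σ r)) (σ a) = _
        rw [pathTo, if_neg hσy, if_neg hσl,
          show pathTo (node l y r) a = y :: pathTo r a by rw [pathTo, if_neg hay, if_neg hal],
          List.map_cons, ihr a (fun x hx y' hy' h => hinj x (mem_node_right hx) y' (mem_node_right hy') h) har]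

lemma subtreeAt_map [DecidableEq α] [DecidableEq β] (σ : α → β) :
    ∀ (t : FullBinTree α) (a : α),
    (∀ x ∈ inorder t, ∀ y ∈ inorder t, σ x = σ y → x = y) → a ∈ inorder t →
    subtreeAt (mapNodes σ t) (σ a) = mapNodes σ (subtreeAt t a) := by
  intro t
  induction t with
  | leaf y => intro a _ _; simp [mapNodes, subtreeAt]
  | node l y r ihl ihr =>
    intro a hinj ha
    have hyt : y ∈ inorder (node l y r) := mem_node_root
    by_cases hay : a = y
    · subst hay; simp [mapNodes, subtreeAt]
    · have hσy : ¬ (σ a = σ y) := fun h => hay (hinj a ha y hyt h)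
      by_cases hal : a ∈ inorder l
      · have hσl : σ a ∈ inorder (mapNodes σ l) := by
          rw [inorder_mapNodes]; exact List.mem_map_of_mem hal
        show subtreeAt (node (mapNodes σ l) (σ y) (mapNodes σ r)) (σ a) = _
        rw [subtreeAt, if_neg hσy, if_pos hσl,
          show subtreeAt (node l y r) a = subtreeAt l a by rw [subtreeAt, if_neg hay, if_pos hal]]
        exact ihl a (fun x hx y' hy' h => hinj x (mem_node_left hx) y' (mem_node_left hy') h) hal
      · have hσl : σ a ∉ inorder (mapNodes σ l) := by
          rw [inorder_mapNodes]
          intro hmem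
          obtain ⟨x, hx, hxe⟩ := List.mem_map.1 hmem
          exact hal (hinj x (mem_node_left hx) a ha hxe ▸ hx)
        have har : a ∈ inorder r := by
          rcases mem_node_iff.1 ha with h | h | h
          · exact absurd h hal
          · exact absurd h hay
          · exact h
        show subtreeAt (node (mapNodes σ l) (σ y) (mapNodes σ r)) (σ a) = _
        rw [subtreeAt, if_neg hσy, if_neg hσl,
          show subtreeAt (node l y r) a = subtreeAt r a by rw [subtreeAt, if_neg hay, if_neg hal]]
        exact ihr a (fun x hx y' hy' h => hinj x (mem_node_right hx) y' (mem_node_right hy') h) har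

lemma bOf_map [DecidableEq α] (σ : α → α) (v w : α → ℝ) (t : FullBinTree α)
    (hinj : ∀ x ∈ inorder t, ∀ y ∈ inorder t, σ x = σ y → x = y)
    (hord : ∀ x ∈ inorder t, ∀ y ∈ inorder t, (v x < v y ↔ w (σ x) < w (σ y)))
    (a : α) (ha : a ∈ inorder t) :
    bOf (mapNodes σ t) w (σ a) = Option.map σ (bOf t v a) := by
  unfold bOf
  rw [pathTo_map σ t a hinj ha, ← List.map_dropLast, ← List.map_reverse, List.find?_map]
  congr 1
  apply find?_congr'
  intro b hb
  have hbt : b ∈ inorder t :=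
    pathTo_subset t a b (List.dropLast_subset _ (List.mem_reverse.1 hb))
  simp only [Function.comp_apply]
  rw [subtreeAt_map σ t b hinj hbt, inorder_mapNodes, List.any_map]
  apply any_congr'
  intro u hu
  have hut : u ∈ inorder t := subtreeAt_subset t b u hu
  simp only [Function.comp_apply]
  exact decide_eq_decide.2 (hord u hut a ha).symm

end FullBinTree

/-- **max slide.** If the lists `c` and `c'` agree except at one item,
`p` and `q` are neighboring interior items contiguous in both, `p` is non-critical and
`q` is a local maximum in `c`, while `p` is a local maximum and `q` is non-critical in
`c'`, then the critical items of `c'` are those of `c` with `q` replaced by `p`, and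
relabeling `q` to `p` is an isomorphism of `T(c)` onto `T(c')` preserving both the tree
structure and the Condition-II path decomposition. -/
theorem statement8 (m : ℕ) (hm : 2 ≤ m) (c c' : ℕ → ℝ)
    (hgen : Set.InjOn c (Set.Icc 1 m)) (hgen' : Set.InjOn c' (Set.Icc 1 m))
    (h12 : c 1 < c 2) (hlast : c m < c (m - 1))
    (h12' : c' 1 < c' 2) (hlast' : c' m < c' (m - 1))
    (hagree : ∃ j, 1 ≤ j ∧ j ≤ m ∧ c' j ≠ c j ∧ ∀ i, 1 ≤ i → i ≤ m → i ≠ j → c' i = c i)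
    (p q : ℕ) (hnbr : q = p + 1 ∨ p = q + 1)
    (hp1 : 1 < p) (hpm : p < m) (hq1 : 1 < q) (hqm : q < m)
    (hcontig : Contig m c p q) (hcontig' : Contig m c' p q)
    (hpc : ¬ IsCritItem m c p) (hqc : IsLocMax m c q)
    (hpc' : IsLocMax m c' p) (hqc' : ¬ IsCritItem m c' q)
    (t t' : FullBinTree ℕ) (ht : IsTreeOf m c t) (ht' : IsTreeOf m c' t') :
    (∀ i, IsCritItem m c' i ↔ ((IsCritItem m c i ∧ i ≠ q) ∨ i = p)) ∧
    t' = FullBinTree.mapNodes (fun x => if x = q then p else x) t ∧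
    (∀ a ∈ FullBinTree.leafList t,
      FullBinTree.bOf t' c' ((fun x => if x = q then p else x) a)
        = Option.map (fun x => if x = q then p else x) (FullBinTree.bOf t c a)) := by
  set σ : ℕ → ℕ := fun x => if x = q then p else x with hσdef
  have hpq : p ≠ q := by omega
  have hσq : σ q = p := by simp [hσdef]
  have hσ_ne : ∀ x, x ≠ q → σ x = x := by intro x hx; simp [hσdef, hx]
  -- basic order facts
  have hcpq : c p < c q := by
    rcases hnbr with h | h
    · have := hqc.2.2.1; rw [show q - 1 = p by omega] at this; exact this
    · have := hqc.2.2.2; rw [show q + 1 = p by omega] at this; exact this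
  have hcqp' : c' q < c' p := by
    rcases hnbr with h | h
    · have := hpc'.2.2.2; rw [show p + 1 = q by omega] at this; exact this
    · have := hpc'.2.2.1; rw [show p - 1 = q by omega] at this; exact this
  obtain ⟨j, hj1, hjm, hjne, hjeq⟩ := hagree
  have hjpq : j = p ∨ j = q := by
    by_contra h
    push_neg at h
    have e1 : c' p = c p := hjeq p (by omega) (by omega) (fun e => h.1 e.symm)
    have e2 : c' q = c q := hjeq q (by omega) (by omega) (fun e => h.2 e.symm)
    linarith
  have K1 : ∀ u, 1 ≤ u → u ≤ m → u ≠ p → u ≠ q → c' u = c u := by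
    intro u h1 h2 h3 h4
    rcases hjpq with rfl | rfl
    · exact hjeq u h1 h2 h3
    · exact hjeq u h1 h2 h4
  have Kmain : ∀ u, 1 ≤ u → u ≤ m → u ≠ p → u ≠ q →
      ((c u < c p ∧ c u < c q ∧ c u < c' p ∧ c u < c' q) ∨
       (c p < c u ∧ c q < c u ∧ c' p < c u ∧ c' q < c u)) := by
    intro u h1 h2 h3 h4
    have hcu' : c' u = c u := K1 u h1 h2 h3 h4
    have hd1 : c u < c p ∨ c q < c u := by
      have h := hcontig u h1 h2 h3 h4
      rw [min_eq_left hcpq.le, max_eq_right hcpq.le] at h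
      simp only [Set.mem_Icc, not_and_or, not_le] at h
      tauto
    have hd2 : c u < c' q ∨ c' p < c u := by
      have h := hcontig' u h1 h2 h3 h4
      rw [min_eq_right hcqp'.le, max_eq_left hcqp'.le] at h
      simp only [Set.mem_Icc, not_and_or, not_le, hcu'] at h
      tauto
    rcases hjpq with rfl | rfl
    · -- j = p : c' q = c q
      have hq' : c' q = c q := hjeq q (by omega) (by omega) (by omega)
      rcases hd1 with h | h
      · left; refine ⟨h, by linarith, by linarith, by linarith⟩
      · rcases hd2 with h' | h'
        · linarith
        · right; exact ⟨by linarith, h, h', by linarith⟩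
    · -- j = q : c' p = c p
      have hp' : c' p = c p := hjeq p (by omega) (by omega) (by omega)
      rcases hd1 with h | h
      · left; refine ⟨h, by linarith, by linarith, by
          rcases hd2 with h' | h' <;> linarith⟩
      · right; exact ⟨by linarith, h, by linarith, by linarith⟩
  have critRange : ∀ (cc : ℕ → ℝ) i, IsCritItem m cc i → 1 ≤ i ∧ i ≤ m := by
    intro cc i h
    rcases h with (h | h | ⟨h1', h2', _⟩) | ⟨h1', h2', _⟩ <;> omega
  -- order isomorphism on critical items of c
  have ordiso : ∀ x, IsCritItem m c x → ∀ y, IsCritItem m c y →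
      (c x < c y ↔ c' (σ x) < c' (σ y)) := by
    intro x hx y hy
    have hxr := critRange c x hx
    have hyr := critRange c y hy
    have hxp : x ≠ p := fun h => hpc (h ▸ hx)
    have hyp : y ≠ p := fun h => hpc (h ▸ hy)
    by_cases hxq : x = q <;> by_cases hyq : y = q
    · subst hxq; subst hyq; simp
    · subst hxq
      rw [hσq, hσ_ne y hyq, K1 y hyr.1 hyr.2 hyp hyq]
      rcases Kmain y hyr.1 hyr.2 hyp hyq with ⟨h1, h2, h3, h4⟩ | ⟨h1, h2, h3, h4⟩ <;>
        constructor <;> intro h <;> linarith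
    · subst hyq
      rw [hσq, hσ_ne x hxq, K1 x hxr.1 hxr.2 hxp hxq]
      rcases Kmain x hxr.1 hxr.2 hxp hxq with ⟨h1, h2, h3, h4⟩ | ⟨h1, h2, h3, h4⟩ <;>
        constructor <;> intro h <;> linarith
    · rw [hσ_ne x hxq, hσ_ne y hyq, K1 x hxr.1 hxr.2 hxp hxq, K1 y hyr.1 hyr.2 hyp hyq]
  -- comparison preservation for non-{p,q} items
  have cmp : ∀ i, 1 ≤ i → i ≤ m → i ≠ p → i ≠ q → ∀ w, 1 ≤ w → w ≤ m →
      ((c w < c i ↔ c' w < c' i) ∧ (c i < c w ↔ c' i < c' w)) := by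
    intro i hi1 hi2 hip hiq w hw1 hw2
    have hci : c' i = c i := K1 i hi1 hi2 hip hiq
    rw [hci]
    by_cases hwp : w = p
    · subst hwp
      rcases Kmain i hi1 hi2 hip hiq with ⟨h1, h2, h3, h4⟩ | ⟨h1, h2, h3, h4⟩ <;>
        exact ⟨by constructor <;> intro h <;> linarith, by constructor <;> intro h <;> linarith⟩
    by_cases hwq : w = q
    · subst hwq
      rcases Kmain i hi1 hi2 hip hiq with ⟨h1, h2, h3, h4⟩ | ⟨h1, h2, h3, h4⟩ <;>
        exact ⟨by constructor <;> intro h <;> linarith, by constructor <;> intro h <;> linarith⟩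
    · rw [K1 w hw1 hw2 hwp hwq]
      exact ⟨Iff.rfl, Iff.rfl⟩
  -- Part 1
  have part1 : ∀ i, IsCritItem m c' i ↔ ((IsCritItem m c i ∧ i ≠ q) ∨ i = p) := by
    intro i
    by_cases hip : i = p
    · subst hip
      exact iff_of_true (Or.inr hpc') (Or.inr rfl)
    by_cases hiq : i = q
    · subst hiq
      exact iff_of_false hqc' (by rintro (⟨_, h⟩ | h) <;> [exact h rfl; exact hpq h.symm])
    by_cases hi1 : i = 1
    · subst hi1
      exact iff_of_true (Or.inl (Or.inl rfl)) (Or.inl ⟨Or.inl (Or.inl rfl), hiq⟩)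
    by_cases him : i = m
    · subst him
      exact iff_of_true (Or.inl (Or.inr (Or.inl rfl))) (Or.inl ⟨Or.inl (Or.inr (Or.inl rfl)), hiq⟩)
    by_cases hint : 1 < i ∧ i < m
    · -- interior, i ∉ {p, q}
      have e1 := cmp i (by omega) (by omega) hip hiq (i - 1) (by omega) (by omega)
      have e2 := cmp i (by omega) (by omega) hip hiq (i + 1) (by omega) (by omega)
      simp only [IsCritItem, IsCritLeaf, IsLocMin, IsLocMax, hi1, him, hip, hiq,
        false_or, or_false, ne_eq, not_false_iff, and_true]
      rw [← e1.1, ← e1.2, ← e2.1, ← e2.2]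
    · have hno : ∀ cc : ℕ → ℝ, ¬ IsCritItem m cc i := by
        intro cc h
        rcases h with (h | h | ⟨h1', h2', _⟩) | ⟨h1', h2', _⟩ <;> omega
      exact iff_of_false (hno c') (by rintro (⟨h, _⟩ | h) <;> [exact hno c h; exact hip h])
  -- list of critical items
  have hmemt : ∀ i, i ∈ FullBinTree.inorder t ↔ IsCritItem m c i := ht.2.1
  have hmemt' : ∀ i, i ∈ FullBinTree.inorder t' ↔ IsCritItem m c' i := ht'.2.1
  have hq_mem : q ∈ FullBinTree.inorder t := (hmemt q).2 (Or.inr hqc)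
  have hnotp : ∀ x ∈ FullBinTree.inorder t, x ≠ p := by
    intro x hx h
    exact hpc (h ▸ (hmemt x).1 hx)
  -- injectivity of σ on inorder t
  have hσinj : ∀ x ∈ FullBinTree.inorder t, ∀ y ∈ FullBinTree.inorder t, σ x = σ y → x = y := by
    intro x hx y hy h
    have hxp := hnotp x hx
    have hyp := hnotp y hy
    by_cases hxq : x = q <;> by_cases hyq : y = q
    · rw [hxq, hyq]
    · rw [hxq] at h ⊢; rw [hσq, hσ_ne y hyq] at h; exact absurd h.symm hyp
    · rw [hyq] at h ⊢; rw [hσq, hσ_ne x hxq] at h; exact absurd h hxp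
    · rwa [hσ_ne x hxq, hσ_ne y hyq] at h
  -- membership in the mapped list
  have hmemmap : ∀ i, i ∈ (FullBinTree.inorder t).map σ ↔ IsCritItem m c' i := by
    intro i
    rw [part1 i]
    constructor
    · intro h
      obtain ⟨x, hx, rfl⟩ := List.mem_map.1 h
      have hcx : IsCritItem m c x := (hmemt x).1 hx
      by_cases hxq : x = q
      · subst hxq; right; exact hσq
      · left; rw [hσ_ne x hxq]; exact ⟨hcx, hxq⟩
    · rintro (⟨hcrit, hiq⟩ | rfl)
      · exact List.mem_map.2 ⟨i, (hmemt i).2 hcrit, hσ_ne i hiq⟩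
      · exact List.mem_map.2 ⟨q, hq_mem, hσq⟩
  -- sortedness of the mapped list
  have hpairt : List.Pairwise (· < ·) (FullBinTree.inorder t) := List.isChain_iff_pairwise.1 ht.1
  have hpairmap : List.Pairwise (· < ·) ((FullBinTree.inorder t).map σ) := by
    rw [List.pairwise_map]
    refine hpairt.imp_of_mem ?_
    intro a b ha hb hab
    have hap := hnotp a ha
    have hbp := hnotp b hb
    by_cases haq : a = q <;> by_cases hbq : b = q
    · omega
    · rw [haq, hσq, hσ_ne b hbq]; omega
    · rw [hbq, hσq, hσ_ne a haq]; omega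
    · rw [hσ_ne a haq, hσ_ne b hbq]; exact hab
  -- equal inorder lists
  have hinEq : FullBinTree.inorder t' = (FullBinTree.inorder t).map σ := by
    have h1 : List.Pairwise (· < ·) (FullBinTree.inorder t') := List.isChain_iff_pairwise.1 ht'.1
    refine List.Perm.eq_of_pairwise' h1 hpairmap ?_
    refine (List.perm_ext_iff_of_nodup (h1.imp ?_) (hpairmap.imp ?_)).2 ?_
    · exact fun h => ne_of_lt h
    · exact fun h => ne_of_lt h
    · intro a; rw [hmemt' a, hmemmap a]
  -- ValOrdered transfer
  have hvo : FullBinTree.ValOrdered c' (FullBinTree.mapNodes σ t) :=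
    FullBinTree.valOrdered_map σ c c' t ht.2.2
      (fun x hx y hy h => (ordiso x ((hmemt x).1 hx) y ((hmemt y).1 hy)).1 h)
  -- tree equality
  have hteq : t' = FullBinTree.mapNodes σ t := by
    apply FullBinTree.tree_unique c' t' (FullBinTree.mapNodes σ t) ht'.2.2 hvo
    · intro x hx y hy hv
      have hxr := critRange c' x ((hmemt' x).1 hx)
      have hyr := critRange c' y ((hmemt' y).1 hy)
      exact hgen' (Set.mem_Icc.2 hxr) (Set.mem_Icc.2 hyr) hv
    · rw [FullBinTree.inorder_mapNodes]; exact hinEq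
  refine ⟨part1, hteq, ?_⟩
  intro a ha
  rw [hteq]
  exact FullBinTree.bOf_map σ c c' t hσinj
    (fun x hx y hy => ordiso x ((hmemt x).1 hx) y ((hmemt y).1 hy))
    a (FullBinTree.leafList_subset t a ha)
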